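/- Let p be an odd prime and let P, Q be nonzero integers with p ∤ Q and p | D, where D = P² − 4Q. Then p divides U_p(P,Q), and for every n ≥ 1, p divides U_n(P,Q) if and only if p divides n. -/
import Mathlib


def lucasU (P Q : ℤ) : ℕ → ℤ
  | 0 => 0
  | 1 => 1
  | (n + 2) => P * lucasU P Q (n + 1) - Q * lucasU P Q n

theorem dvd_lucasU_iff_of_dvd_disc (p : ℕ) (hp : p.Prime) (hodd : Odd p)
    (P Q : ℤ) (hP : P ≠ 0) (hQ : Q ≠ 0)
    (hpQ : ¬ (p : ℤ) ∣ Q) (hpD : (p : ℤ) ∣ (P ^ 2 - 4 * Q)) :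
    (p : ℤ) ∣ lucasU P Q p ∧
      ∀ n : ℕ, 1 ≤ n → ((p : ℤ) ∣ lucasU P Q n ↔ p ∣ n) := by
  haveI : Fact p.Prime := ⟨hp⟩
  have hpne2 : p ≠ 2 := by
    rintro rfl
    revert hodd
    decide
  have hpI : Prime (p : ℤ) := Nat.prime_iff_prime_int.mp hp
  have hp4 : ¬ (p : ℤ) ∣ 4 := by
    intro h
    have h4 : p ∣ 4 := by exact_mod_cast h
    have h2' : p ∣ 2 ^ 2 := by simpa using h4
    exact hpne2 ((Nat.prime_dvd_prime_iff_eq hp Nat.prime_two).mp (hp.dvd_of_dvd_pow h2'))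
  have hpP : ¬ (p : ℤ) ∣ P := by
    intro h
    have h2 : (p : ℤ) ∣ 4 * Q := by
      have hsq : (p : ℤ) ∣ P ^ 2 := Dvd.dvd.pow h (by norm_num)
      have hd := dvd_sub hsq hpD
      have he : P ^ 2 - (P ^ 2 - 4 * Q) = 4 * Q := by ring
      rwa [he] at hd
    rcases hpI.dvd_mul.mp h2 with h3 | h3
    · exact hp4 h3
    · exact hpQ h3
  have h2z : (2 : ZMod p) ≠ 0 := by
    intro h
    have : ((2 : ℕ) : ZMod p) = 0 := by exact_mod_cast h
    have := (ZMod.natCast_eq_zero_iff 2 p).mp this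
    exact hpne2 ((Nat.prime_dvd_prime_iff_eq hp Nat.prime_two).mp this)
  have hPz : ((P : ZMod p)) ≠ 0 := by
    intro h
    exact hpP ((ZMod.intCast_zmod_eq_zero_iff_dvd P p).mp h)
  have hq : (4 : ZMod p) * (Q : ZMod p) = (P : ZMod p) ^ 2 := by
    have : (((P ^ 2 - 4 * Q : ℤ)) : ZMod p) = 0 :=
      (ZMod.intCast_zmod_eq_zero_iff_dvd _ p).mpr hpD
    push_cast at this
    linear_combination -this
  -- key identity
  have key : ∀ n : ℕ, (2 : ZMod p) ^ n * ((lucasU P Q (n+1) : ℤ) : ZMod p)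
      = (n + 1 : ℕ) * (P : ZMod p) ^ n := by
    have K : ∀ n : ℕ,
        ((2 : ZMod p) ^ n * ((lucasU P Q (n+1) : ℤ) : ZMod p)
          = (n + 1 : ℕ) * (P : ZMod p) ^ n) ∧
        ((2 : ZMod p) ^ (n+1) * ((lucasU P Q (n+2) : ℤ) : ZMod p)
          = (n + 2 : ℕ) * (P : ZMod p) ^ (n+1)) := by
      intro n
      induction n with
      | zero => simp [lucasU]
      | succ m ih =>
        refine ⟨ih.2, ?_⟩
        have hrec : (lucasU P Q (m+3) : ℤ) = P * lucasU P Q (m+2) - Q * lucasU P Q (m+1) := rfl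
        show (2 : ZMod p) ^ (m+2) * ((lucasU P Q (m+3) : ℤ) : ZMod p)
          = (m + 3 : ℕ) * (P : ZMod p) ^ (m+2)
        rw [hrec]
        push_cast
        obtain ⟨h1, h2⟩ := ih
        push_cast at h1 h2
        ring_nf
        ring_nf at h1 h2 hq
        linear_combination (2 : ZMod p) * (P : ZMod p) * h2 - (P:ZMod p)^m * (m+1) * hq
          - 4 * (Q : ZMod p) * h1
    exact fun n => (K n).1
  have main : ∀ n : ℕ, 1 ≤ n → ((p : ℤ) ∣ lucasU P Q n ↔ p ∣ n) := by
    intro n hn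
    obtain ⟨m, rfl⟩ := Nat.exists_eq_add_of_le hn
    rw [← ZMod.intCast_zmod_eq_zero_iff_dvd]
    rw [show (1 + m) = m + 1 by ring]
    constructor
    · intro h
      have := key m
      rw [h, mul_zero] at this
      have hc : ((m + 1 : ℕ) : ZMod p) = 0 := by
        have := this.symm
        rcases mul_eq_zero.mp this with h' | h'
        · exact h'
        · exact absurd h' (pow_ne_zero _ hPz)
      exact (ZMod.natCast_eq_zero_iff _ p).mp hc
    · intro h
      have hc : ((m + 1 : ℕ) : ZMod p) = 0 := (ZMod.natCast_eq_zero_iff _ p).mpr h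
      have := key m
      rw [hc, zero_mul] at this
      rcases mul_eq_zero.mp this with h' | h'
      · exact absurd h' (pow_ne_zero _ h2z)
      · exact h'
  exact ⟨(main p hp.one_lt.le).mpr dvd_rfl, main⟩
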